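/- Let C be a uniform clutter (all edges of C have the same cardinality) with characteristic vectors v_1,...,v_s, and let X be the algebraic toric set parameterized by the monomials of the edges of C over F_q with q ≥ 3. If the vanishing ideal I(X) is a complete intersection, then the vectors v_1,...,v_s are linearly independent over the rationals. -/

import Mathlib

/-!
Suppose `v₁, …, v_s` are linearly dependent and let `m = q - 1`. A primitive integer relation `c`
satisfies `∑ cᵢ = 0` because the clutter is uniform, so `t^{c⁺} - t^{c⁻}` is a form in `I(X)` whose
two exponent vectors are not congruent modulo `m`.

On the other hand `I(X)` contains the `s - 1` forms `tᵢ^m - t_s^m` of degree `m`, and their images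
`y^{m vᵢ} - y^{m v_s}` under the substitution `tᵢ ↦ y^{vᵢ}` are linearly independent, because the
edges are distinct. The substitution kills every form of `I(X)` of degree `d < m`: its image has
degree at most `d < q - 1` in each variable and vanishes on the torus `(K^*)^n`. If `I(X)` is
generated by `s - 1` forms, comparing degree-`m` parts shows that all of them have degree `m` and
span the same space as the `tᵢ^m - t_s^m`, so these generate `I(X)`. But reducing exponents modulo
`m` is a ring map that kills every `tᵢ^m - t_k^m` and not `t^{c⁺} - t^{c⁻}`.
-/

noncomputable section

open scoped BigOperators

/-- The vanishing ideal `I(Y)` of a set `Y` of points in projective space: the ideal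
generated by the homogeneous polynomials vanishing at every point of `Y`. -/
def vanishingIdeal (K : Type*) [Field K] {s : ℕ}
    (Y : Set (Projectivization K (Fin s → K))) : Ideal (MvPolynomial (Fin s) K) :=
  Ideal.span {f | (∃ d, f.IsHomogeneous d) ∧ ∀ P ∈ Y, MvPolynomial.eval P.rep f = 0}

/-- The Hilbert function `d ↦ dim_K (S/I)_d` of the standard graded quotient `S/I`. -/
def hilbertFunction {K : Type*} [Field K] {s : ℕ}
    (I : Ideal (MvPolynomial (Fin s) K)) (d : ℕ) : ℕ :=
  Module.finrank K ((MvPolynomial.homogeneousSubmodule (Fin s) K d).map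
    (Ideal.Quotient.mkₐ K I).toLinearMap)

/-- The index of regularity of `S/I(Y)`: the least `p ≥ 0` such that
`H_Y(d) = |Y|` for all `d ≥ p`. -/
def regIndex {K : Type*} [Field K] {s : ℕ}
    (Y : Set (Projectivization K (Fin s → K))) : ℕ :=
  sInf {p : ℕ | ∀ d, p ≤ d → hilbertFunction (vanishingIdeal K Y) d = Y.ncard}

/-- The algebraic toric set in `P^{s-1}` parameterized by the monomials `y^{v_1},…,y^{v_s}`. -/
def toricSet (K : Type*) [Field K] {n s : ℕ} (v : Fin s → Fin n → ℕ) :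
    Set (Projectivization K (Fin s → K)) :=
  {P | ∃ x : Fin n → K, (∀ j, x j ≠ 0) ∧
      ∃ h : (fun i : Fin s => ∏ j, x j ^ v i j) ≠ 0,
        P = Projectivization.mk K (fun i : Fin s => ∏ j, x j ^ v i j) h}

/-- The projective torus in `P^{s-1}`: the points all of whose coordinates are nonzero. -/
def projTorus (K : Type*) [Field K] (s : ℕ) : Set (Projectivization K (Fin s → K)) :=
  {P | ∀ i, P.rep i ≠ 0}

/-- The parameterized (evaluation) code `C_Y(d)`: the image of the degree-`d` evaluation map
`f ↦ (f(P)/t_1^d(P))_{P ∈ Y}`. -/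
def evalCode (K : Type*) [Field K] {s : ℕ} [NeZero s]
    (Y : Set (Projectivization K (Fin s → K))) (d : ℕ) : Set (Y → K) :=
  {w | ∃ f ∈ MvPolynomial.homogeneousSubmodule (Fin s) K d,
      w = fun P : Y => MvPolynomial.eval (P : Projectivization K (Fin s → K)).rep f /
        ((P : Projectivization K (Fin s → K)).rep 0) ^ d}

/-- The minimum distance of a code: the least number of nonzero entries of a
nonzero codeword. -/
def minDist {K : Type*} [Field K] {ι : Type*} (C : Set (ι → K)) : ℕ :=
  sInf {m | ∃ w ∈ C, w ≠ 0 ∧ m = {i | w i ≠ 0}.ncard}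

/-- `v 1,…,v s` are the characteristic vectors of the edges of a clutter: all the entries
are in `{0,1}` and no edge (support) is contained in another. -/
def IsClutter {n s : ℕ} (v : Fin s → Fin n → ℕ) : Prop :=
  (∀ i j, v i j ≤ 1) ∧ ∀ i k : Fin s, i ≠ k → ∃ j, v i j ≠ 0 ∧ v k j = 0

/-- An ideal of `K[t_1,…,t_s]` is a complete intersection if it can be generated by `s-1`
homogeneous polynomials. -/
def IsCompleteIntersection {K : Type*} [Field K] {s : ℕ}
    (I : Ideal (MvPolynomial (Fin s) K)) : Prop :=
  ∃ g : Fin (s - 1) → MvPolynomial (Fin s) K,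
    (∀ i, ∃ d, (g i).IsHomogeneous d) ∧ Ideal.span (Set.range g) = I

end

open MvPolynomial

namespace MvPolynomial

variable {σ K : Type*} [Field K]

theorem IsHomogeneous.sum_eq_of_mem_support [Fintype σ] {f : MvPolynomial σ K} {d : ℕ}
    (hf : f.IsHomogeneous d) {a : σ →₀ ℕ} (ha : a ∈ f.support) : ∑ i, a i = d := by
  rw [← Finsupp.degree_eq_sum, Finsupp.degree_eq_weight_one]
  exact hf (mem_support_iff.mp ha)

theorem IsHomogeneous.eval_smul [Fintype σ] {f : MvPolynomial σ K} {d : ℕ}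
    (hf : f.IsHomogeneous d) (c : K) (y : σ → K) : eval (c • y) f = c ^ d * eval y f := by
  rw [eval_eq', eval_eq', Finset.mul_sum]
  refine Finset.sum_congr rfl fun a ha => ?_
  simp only [Pi.smul_apply, smul_eq_mul, mul_pow, Finset.prod_mul_distrib,
    Finset.prod_pow_eq_pow_sum, hf.sum_eq_of_mem_support ha]
  ring

theorem homogeneousComponent_mul_of_isHomogeneous {g : MvPolynomial σ K} {e : ℕ}
    (hg : g.IsHomogeneous e) (h : MvPolynomial σ K) (m : ℕ) :
    homogeneousComponent m (h * g) =
      if e ≤ m then homogeneousComponent (m - e) h * g else 0 := by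
  classical
  let := MvPolynomial.gradedAlgebra (σ := σ) (R := K)
  simpa [← decomposition.decompose'_apply] using
    DirectSum.coe_decompose_mul_of_right_mem (homogeneousSubmodule σ K) m (a := h)
      ((mem_homogeneousSubmodule _ _).2 hg)

theorem linearIndependent_monomial_sub_monomial_last {r : ℕ} {e : Fin (r + 1) → σ →₀ ℕ}
    (he : Function.Injective e) :
    LinearIndependent K fun i : Fin r =>
      (monomial (e i.castSucc) 1 - monomial (e (Fin.last r)) 1 : MvPolynomial σ K) := by
  rw [Fintype.linearIndependent_iff]
  intro c hc i
  have hmon := Fintype.linearIndependent_iff.mp ((basisMonomials σ K).linearIndependent.comp e he)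
    (Fin.snoc c (-∑ i, c i)) (by
      rw [Fin.sum_univ_castSucc, ← hc]
      simp [smul_sub, Finset.sum_smul, Finset.sum_sub_distrib, ← sub_eq_add_neg])
  simpa using hmon i.castSucc

theorem natCast_eq_of_monomial_sub_monomial_mem_span {ι : Type*} {m : ℕ} {p q : ι → σ}
    {a b : σ →₀ ℕ} (h : monomial a (1 : K) - monomial b 1 ∈
      Ideal.span (Set.range fun l => X (p l) ^ m - X (q l) ^ m)) (i : σ) :
    (a i : ZMod m) = b i := by
  let φ : MvPolynomial σ K →ₐ[K] AddMonoidAlgebra K (σ →₀ ZMod m) :=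
    AddMonoidAlgebra.mapDomainAlgHom K K (Finsupp.mapRange.addMonoidHom (Nat.castAddMonoidHom _))
  have hφ : ∀ e c, φ (monomial e c) = AddMonoidAlgebra.single (e.mapRange (↑) Nat.cast_zero) c :=
    fun e c => AddMonoidAlgebra.mapDomain_single
  have hker : Ideal.span (Set.range fun l => X (p l) ^ m - X (q l) ^ m) ≤ RingHom.ker φ := by
    refine Ideal.span_le.mpr ?_
    rintro _ ⟨l, rfl⟩
    simp [X_pow_eq_monomial, hφ]
  have hφab := hker h
  rw [RingHom.mem_ker, map_sub, hφ, hφ, sub_eq_zero,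
    AddMonoidAlgebra.single_left_inj one_ne_zero] at hφab
  simpa using DFunLike.congr_fun hφab i

section HomogeneousGenerators

open Set

variable {ι R : Type*} [Fintype ι] [CommRing R] [Algebra K R] {g G : ι → MvPolynomial σ K}
  {d : ι → ℕ} {m : ℕ}

theorem exists_sub_sum_smul_mem_span_of_isHomogeneous (hg : ∀ j, (g j).IsHomogeneous (d j))
    {f : MvPolynomial σ K} (hf : f.IsHomogeneous m) (hfg : f ∈ Ideal.span (range g)) :
    ∃ c : ι → K, f - ∑ j with d j = m, c j • g j ∈ Ideal.span (g '' {j | d j < m}) := by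
  classical
  obtain ⟨h, hh⟩ := Ideal.mem_span_range_iff_exists_fun.mp hfg
  refine ⟨fun j => coeff 0 (h j), ?_⟩
  have hcomp : f = ∑ j, if d j ≤ m then homogeneousComponent (m - d j) (h j) * g j else 0 := by
    rw [← homogeneousComponent_eq_self hf, ← hh, map_sum]
    simp only [homogeneousComponent_mul_of_isHomogeneous (hg _)]
  rw [hcomp, Finset.sum_filter, ← Finset.sum_sub_distrib]
  refine Ideal.sum_mem _ fun j _ => ?_
  rcases lt_trichotomy (d j) m with hlt | heq | hgt
  · rw [if_pos hlt.le, if_neg hlt.ne, sub_zero]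
    exact Ideal.mul_mem_left _ _ (Ideal.subset_span (mem_image_of_mem g hlt))
  · rw [if_pos heq.le, if_pos heq, heq, Nat.sub_self, homogeneousComponent_zero, C_mul',
      sub_self]
    exact zero_mem _
  · rw [if_neg (not_le.mpr hgt), if_neg hgt.ne', sub_zero]
    exact zero_mem _

theorem degree_eq_of_linearIndependent_comp (hg : ∀ j, (g j).IsHomogeneous (d j))
    (hG : ∀ i, (G i).IsHomogeneous m) (hGg : ∀ i, G i ∈ Ideal.span (range g))
    (ψ : MvPolynomial σ K →ₐ[K] R) (hψ : ∀ j, d j < m → ψ (g j) = 0)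
    (hψG : LinearIndependent K (ψ ∘ G)) (j : ι) : d j = m := by
  classical
  set T := Finset.univ.filter fun j => d j = m
  have hψ_low : Ideal.span (g '' {j | d j < m}) ≤ RingHom.ker ψ :=
    Ideal.span_le.mpr <| by rintro _ ⟨j, hj, rfl⟩; exact hψ j hj
  have hmem : range (ψ ∘ G) ⊆ Submodule.span K (T.image (ψ ∘ g) : Set R) := by
    rintro _ ⟨i, rfl⟩
    obtain ⟨c, hc⟩ := exists_sub_sum_smul_mem_span_of_isHomogeneous hg (hG i) (hGg i)
    have hψGi := hψ_low hc
    rw [RingHom.mem_ker, map_sub, map_sum, sub_eq_zero] at hψGi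
    simp only [Function.comp_apply, hψGi, map_smul, SetLike.mem_coe]
    exact Submodule.sum_mem _ fun j hj => Submodule.smul_mem _ _
      (Submodule.subset_span (Finset.mem_coe.mpr (Finset.mem_image_of_mem _ hj)))
  have hcard := linearIndependent_le_span_aux' _ hψG _ hmem
  simp only [Finset.coe_sort_coe, Fintype.card_coe] at hcard
  have hT : T = Finset.univ :=
    Finset.eq_univ_of_card _ ((hcard.trans Finset.card_image_le).antisymm' (Finset.card_le_univ T))
  have hj : j ∈ T := hT ▸ Finset.mem_univ j
  simpa [T] using hj

theorem span_range_eq_of_linearIndependent_comp (hg : ∀ j, (g j).IsHomogeneous (d j))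
    (hG : ∀ i, (G i).IsHomogeneous m) (hGg : ∀ i, G i ∈ Ideal.span (range g))
    (ψ : MvPolynomial σ K →ₐ[K] R) (hψ : ∀ j, d j < m → ψ (g j) = 0)
    (hψG : LinearIndependent K (ψ ∘ G)) : Ideal.span (range g) = Ideal.span (range G) := by
  classical
  have hdeg := degree_eq_of_linearIndependent_comp hg hG hGg ψ hψ hψG
  have hG_span : ∀ i, G i ∈ Submodule.span K (range g) := by
    intro i
    obtain ⟨c, hc⟩ := exists_sub_sum_smul_mem_span_of_isHomogeneous hg (hG i) (hGg i)
    simp only [hdeg, lt_irrefl, ofPred_false, image_empty, Ideal.span_empty, Ideal.mem_bot,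
      sub_eq_zero] at hc
    rw [hc]
    exact Submodule.sum_mem _ fun j _ => Submodule.smul_mem _ _ (Submodule.subset_span ⟨j, rfl⟩)
  have hspan : Submodule.span K (range G) = Submodule.span K (range g) := by
    have := FiniteDimensional.span_of_finite K (finite_range g)
    refine Submodule.eq_of_le_of_finrank_le
      (Submodule.span_le.mpr (range_subset_iff.mpr hG_span)) ?_
    rw [finrank_span_eq_card (LinearIndependent.of_comp ψ.toLinearMap hψG)]
    exact finrank_range_le_card g
  refine le_antisymm (Ideal.span_le.mpr ?_) (Ideal.span_le.mpr (range_subset_iff.mpr hGg))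
  rintro _ ⟨j, rfl⟩
  exact Submodule.span_le_restrictScalars K _ _ (hspan ▸ Submodule.subset_span (mem_range_self j))

end HomogeneousGenerators

end MvPolynomial

section IntegerRelations

variable {ι κ : Type*} [Fintype ι]

theorem exists_int_relation_gcd_eq_one {v : ι → κ → ℕ}
    (h : ¬ LinearIndependent ℚ fun i j => (v i j : ℚ)) :
    ∃ c : ι → ℤ, (∀ j, ∑ i, c i * v i j = 0) ∧ Finset.univ.gcd c = 1 := by
  classical
  rw [← LinearIndependent.iff_fractionRing ℤ ℚ, Fintype.not_linearIndependent_iff] at h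
  obtain ⟨g, hg, i₀, hi₀⟩ := h
  obtain ⟨c, hgc, hc⟩ := Finset.univ.extract_gcd g ⟨i₀, Finset.mem_univ _⟩
  refine ⟨c, fun j => ?_, hc⟩
  have hgcd : Finset.univ.gcd g ≠ 0 := fun h0 =>
    hi₀ (Finset.gcd_eq_zero_iff.mp h0 i₀ (Finset.mem_univ _))
  have hgj : ∑ i, g i * v i j = 0 := by
    have : ∑ i, (g i : ℚ) * v i j = 0 := by simpa using congrFun hg j
    exact_mod_cast this
  refine mul_left_cancel₀ hgcd ?_
  rw [mul_zero, Finset.mul_sum, ← hgj]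
  simp [hgc, mul_assoc]

theorem sum_toNat_mul_eq_sum_toNat_neg_mul {c : ι → ℤ} {w : ι → ℕ} (h : ∑ i, c i * w i = 0) :
    ∑ i, (c i).toNat * w i = ∑ i, (-c i).toNat * w i := by
  zify
  rw [← sub_eq_zero, ← Finset.sum_sub_distrib, ← h]
  refine Finset.sum_congr rfl fun i _ => ?_
  rw [← sub_mul, Int.toNat_sub_toNat_neg]

theorem sum_eq_zero_of_relation_of_uniform [Fintype κ] {v : ι → κ → ℕ} {c : ι → ℤ}
    (hc : ∀ j, ∑ i, c i * v i j = 0) (hunif : ∀ i k, ∑ j, v i j = ∑ j, v k j) {i₀ : ι}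
    (hi₀ : ∑ j, v i₀ j ≠ 0) : ∑ i, c i = 0 := by
  have h : (∑ i, c i) * ∑ j, (v i₀ j : ℤ) = 0 :=
    calc (∑ i, c i) * ∑ j, (v i₀ j : ℤ) = ∑ i, c i * ∑ j, (v i j : ℤ) := by
          rw [Finset.sum_mul]
          refine Finset.sum_congr rfl fun i _ => ?_
          exact_mod_cast congrArg (c i * ·) (congrArg Nat.cast (hunif i₀ i))
      _ = ∑ j, ∑ i, c i * v i j := by simp_rw [Finset.mul_sum]; exact Finset.sum_comm
      _ = 0 := Finset.sum_eq_zero fun j _ => hc j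
  exact (mul_eq_zero.mp h).resolve_right (by exact_mod_cast hi₀)

end IntegerRelations

theorem IsClutter.injective {n s : ℕ} {v : Fin s → Fin n → ℕ} (hv : IsClutter v) :
    Function.Injective v := by
  intro i k h
  by_contra hik
  obtain ⟨j, hij, hkj⟩ := hv.2 i k hik
  exact hij (by rw [h]; exact hkj)

section Toric

variable {K : Type*} [Field K] {n s : ℕ}

def toricPoint (v : Fin s → Fin n → ℕ) (x : Fin n → K) : Fin s → K :=
  fun i => ∏ j, x j ^ v i j

variable (K) in
noncomputable def toricHom (v : Fin s → Fin n → ℕ) :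
    MvPolynomial (Fin s) K →ₐ[K] MvPolynomial (Fin n) K :=
  aeval fun i => monomial (Finsupp.equivFunOnFinite.symm (v i)) 1

theorem toricHom_monomial (v : Fin s → Fin n → ℕ) (a : Fin s →₀ ℕ) (c : K) :
    toricHom K v (monomial a c) =
      monomial (∑ i, a i • Finsupp.equivFunOnFinite.symm (v i)) c := by
  rw [toricHom, aeval_monomial, Finsupp.prod_fintype _ _ (by simp)]
  simp only [monomial_pow, one_pow, ← monomial_sum_one, algebraMap_eq, C_mul_monomial, mul_one]

theorem toricHom_X_pow (v : Fin s → Fin n → ℕ) (i : Fin s) (k : ℕ) :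
    toricHom K v (X i ^ k) = monomial (k • Finsupp.equivFunOnFinite.symm (v i)) 1 := by
  simp [toricHom, monomial_pow]

theorem eval_toricHom (v : Fin s → Fin n → ℕ) (x : Fin n → K) (f : MvPolynomial (Fin s) K) :
    eval x (toricHom K v f) = eval (toricPoint v x) f := by
  change aeval x (toricHom K v f) = aeval (toricPoint v x) f
  rw [toricHom, ← AlgHom.comp_apply, comp_aeval]
  congr 2
  funext i
  simp [toricPoint, aeval_monomial, Finsupp.prod_fintype]

theorem degreeOf_toricHom_le {v : Fin s → Fin n → ℕ} (hv : ∀ i j, v i j ≤ 1)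
    {f : MvPolynomial (Fin s) K} {d : ℕ} (hf : f.IsHomogeneous d) (j : Fin n) :
    degreeOf j (toricHom K v f) ≤ d := by
  classical
  rw [f.as_sum, map_sum, degreeOf_le_iff]
  intro A hA
  obtain ⟨a, ha, hAa⟩ := Finset.mem_biUnion.mp (support_sum hA)
  rw [toricHom_monomial] at hAa
  obtain rfl := Finset.mem_singleton.mp (support_monomial_subset hAa)
  calc (∑ i, a i • Finsupp.equivFunOnFinite.symm (v i)) j = ∑ i, a i * v i j := by simp
    _ ≤ ∑ i, a i := Finset.sum_le_sum fun i _ => by simpa using Nat.mul_le_mul_left (a i) (hv i j)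
    _ = d := hf.sum_eq_of_mem_support ha

theorem linearIndependent_toricHom_X_pow_sub_X_pow {r m : ℕ} {v : Fin (r + 1) → Fin n → ℕ}
    (hv : Function.Injective v) (hm : m ≠ 0) :
    LinearIndependent K
      (toricHom K v ∘ fun i : Fin r => X i.castSucc ^ m - X (Fin.last r) ^ m) := by
  simp only [Function.comp_def, map_sub, toricHom_X_pow]
  refine linearIndependent_monomial_sub_monomial_last
    (e := fun i => m • Finsupp.equivFunOnFinite.symm (v i)) fun i k h => hv (funext fun j => ?_)
  simpa [hm] using DFunLike.congr_fun h j

theorem toricPoint_apply_ne_zero (v : Fin s → Fin n → ℕ) {x : Fin n → K} (hx : ∀ j, x j ≠ 0)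
    (i : Fin s) : toricPoint v x i ≠ 0 :=
  Finset.prod_ne_zero_iff.mpr fun j _ => pow_ne_zero _ (hx j)

theorem eval_rep_mk_eq_zero_iff {σ : Type*} [Fintype σ] {f : MvPolynomial σ K} {d : ℕ}
    (hf : f.IsHomogeneous d) {w : σ → K} (hw : w ≠ 0) :
    eval (Projectivization.mk K w hw).rep f = 0 ↔ eval w f = 0 := by
  obtain ⟨μ, hμ⟩ := (Projectivization.mk_eq_mk_iff K _ _ (Projectivization.rep_nonzero _) hw).mp
    (Projectivization.mk_rep _)
  rw [← hμ, Units.smul_def, hf.eval_smul]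
  simp [μ.ne_zero]

theorem eval_rep_eq_zero_of_mem_vanishingIdeal {Y : Set (Projectivization K (Fin s → K))}
    {f : MvPolynomial (Fin s) K} (hf : f ∈ vanishingIdeal K Y)
    {P : Projectivization K (Fin s → K)} (hP : P ∈ Y) : eval P.rep f = 0 := by
  have hker : vanishingIdeal K Y ≤ RingHom.ker (eval P.rep) :=
    Ideal.span_le.mpr fun _ hg => hg.2 P hP
  exact hker hf

variable [NeZero s] {v : Fin s → Fin n → ℕ}

theorem mem_vanishingIdeal_toricSet_iff {f : MvPolynomial (Fin s) K} {d : ℕ}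
    (hf : f.IsHomogeneous d) :
    f ∈ vanishingIdeal K (toricSet K v) ↔
      ∀ x : Fin n → K, (∀ j, x j ≠ 0) → eval (toricPoint v x) f = 0 := by
  refine ⟨fun hfX x hx => ?_, fun h => Ideal.subset_span ⟨⟨d, hf⟩, ?_⟩⟩
  · have hne : toricPoint v x ≠ 0 := fun h0 => toricPoint_apply_ne_zero v hx 0 (congrFun h0 0)
    exact (eval_rep_mk_eq_zero_iff hf hne).mp
      (eval_rep_eq_zero_of_mem_vanishingIdeal hfX ⟨x, hx, hne, rfl⟩)
  · rintro _ ⟨x, hx, hne, rfl⟩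
    exact (eval_rep_mk_eq_zero_iff hf hne).mpr (h x hx)

theorem toricHom_eq_zero_of_mem_vanishingIdeal [Fintype K] (hv : ∀ i j, v i j ≤ 1)
    {f : MvPolynomial (Fin s) K} {d : ℕ} (hf : f.IsHomogeneous d) (hd : d + 1 < Fintype.card K)
    (hfX : f ∈ vanishingIdeal K (toricSet K v)) : toricHom K v f = 0 := by
  classical
  refine eq_zero_of_eval_zero_at_prod_finset _ (fun _ => Finset.univ.erase 0) (fun j => ?_)
    fun x hx => ?_
  · rw [Finset.card_erase_of_mem (Finset.mem_univ _), Finset.card_univ]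
    have := degreeOf_toricHom_le hv hf j
    omega
  · rw [eval_toricHom]
    exact (mem_vanishingIdeal_toricSet_iff hf).mp hfX x fun j => Finset.ne_of_mem_erase (hx j)

theorem X_pow_sub_X_pow_mem_vanishingIdeal_toricSet [Fintype K] (i k : Fin s) :
    X i ^ (Fintype.card K - 1) - X k ^ (Fintype.card K - 1) ∈
      vanishingIdeal K (toricSet K v) := by
  refine (mem_vanishingIdeal_toricSet_iff ((isHomogeneous_X_pow _ _).sub
    (isHomogeneous_X_pow _ _))).mpr fun x hx => ?_
  simp [FiniteField.pow_card_sub_one_eq_one _ (toricPoint_apply_ne_zero v hx _)]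

theorem monomial_toNat_sub_monomial_toNat_neg_mem_vanishingIdeal_toricSet {c : Fin s → ℤ}
    (hc : ∀ j, ∑ i, c i * v i j = 0) (hsum : ∑ i, c i = 0) :
    monomial (Finsupp.equivFunOnFinite.symm fun i => (c i).toNat) 1 -
        monomial (Finsupp.equivFunOnFinite.symm fun i => (-c i).toNat) (1 : K) ∈
      vanishingIdeal K (toricSet K v) := by
  have hdeg : ∑ i, (c i).toNat = ∑ i, (-c i).toNat := by
    simpa using sum_toNat_mul_eq_sum_toNat_neg_mul (w := fun _ => 1) (by simpa using hsum)
  have hexp : ∑ i, (c i).toNat • Finsupp.equivFunOnFinite.symm (v i) =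
      ∑ i, (-c i).toNat • Finsupp.equivFunOnFinite.symm (v i) := by
    ext j
    simpa using sum_toNat_mul_eq_sum_toNat_neg_mul (hc j)
  refine (mem_vanishingIdeal_toricSet_iff ((isHomogeneous_monomial _ (Finsupp.degree_eq_sum _)).sub
    (isHomogeneous_monomial _ ((Finsupp.degree_eq_sum _).trans (by simpa using hdeg.symm))))).mpr
    fun x _ => ?_
  rw [← eval_toricHom, map_sub, toricHom_monomial, toricHom_monomial]
  simp [hexp]

end Toric

theorem vanishingIdeal_toricSet_eq_span_of_isCompleteIntersection {K : Type*} [Field K]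
    [Fintype K] {n r : ℕ} {v : Fin (r + 1) → Fin n → ℕ} (hv : IsClutter v)
    (hci : IsCompleteIntersection (vanishingIdeal K (toricSet K v))) :
    vanishingIdeal K (toricSet K v) = Ideal.span (Set.range fun i : Fin r =>
      X i.castSucc ^ (Fintype.card K - 1) - X (Fin.last r) ^ (Fintype.card K - 1)) := by
  obtain ⟨g, hg, hgX⟩ := hci
  choose d hd using hg
  have hK := Fintype.one_lt_card (α := K)
  rw [← hgX]
  refine span_range_eq_of_linearIndependent_comp hd
    (fun _ => (isHomogeneous_X_pow _ _).sub (isHomogeneous_X_pow _ _))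
    (fun _ => hgX ▸ X_pow_sub_X_pow_mem_vanishingIdeal_toricSet _ _) (toricHom K v)
    (fun j hj => toricHom_eq_zero_of_mem_vanishingIdeal hv.1 (hd j) (by omega)
      (hgX ▸ Ideal.subset_span ⟨j, rfl⟩))
    (linearIndependent_toricHom_X_pow_sub_X_pow hv.injective (by omega))

/-- For a uniform clutter with characteristic vectors `v_1,…,v_s` over
`F_q` (`q ≥ 3`), if `I(X)` is a complete intersection then `v_1,…,v_s` are linearly
independent over `ℚ`. -/
theorem stmt9 {K : Type*} [Field K] [Fintype K] {q n s : ℕ}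
    (hq : Fintype.card K = q) (hq3 : 3 ≤ q) (hs : 2 ≤ s)
    (v : Fin s → Fin n → ℕ) (hv : IsClutter v)
    (hunif : ∀ i k : Fin s, ∑ j, v i j = ∑ j, v k j)
    (hci : IsCompleteIntersection (vanishingIdeal K (toricSet K v))) :
    LinearIndependent ℚ (fun i : Fin s => fun j : Fin n => (v i j : ℚ)) := by
  obtain ⟨r, rfl⟩ : ∃ r, s = r + 1 := ⟨s - 1, by omega⟩
  subst hq
  by_contra hdep
  obtain ⟨c, hc, hgcd⟩ := exists_int_relation_gcd_eq_one hdep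
  obtain ⟨j₀, hj₀, -⟩ := hv.2 0 (Fin.last r) (by rw [ne_eq, Fin.ext_iff]; simp; omega)
  have hsum := sum_eq_zero_of_relation_of_uniform hc hunif (i₀ := 0)
    fun h => hj₀ (Finset.sum_eq_zero_iff.mp h j₀ (Finset.mem_univ _))
  have hbinom := monomial_toNat_sub_monomial_toNat_neg_mem_vanishingIdeal_toricSet (K := K) hc hsum
  rw [vanishingIdeal_toricSet_eq_span_of_isCompleteIntersection hv hci] at hbinom
  have hdvd : ∀ i, ((Fintype.card K - 1 : ℕ) : ℤ) ∣ c i := fun i => by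
    have hmod := natCast_eq_of_monomial_sub_monomial_mem_span hbinom i
    rw [← ZMod.intCast_zmod_eq_zero_iff_dvd, ← Int.toNat_sub_toNat_neg (c i), Int.cast_sub,
      Int.cast_natCast, Int.cast_natCast, sub_eq_zero]
    simpa using hmod
  have := Int.eq_one_of_dvd_one (by positivity) (hgcd ▸ Finset.dvd_gcd_iff.mpr fun i _ => hdvd i)
  omega
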